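/- arXiv:1910.00633 — 5 statements merged into one kernel-verified Lean document; each statement's English description precedes it below -/
import Mathlib

section
/- Let S = {A, B, C, D} be a 4-point set in ℝᵈ determining exactly one distinct triangle T with pairwise distinct side lengths d₁, d₂, d₃ (scalene). Then, up to relabeling, AB = CD = d₁, AC = BD = d₂, and AD = BC = d₃; i.e., opposite pairs of edges are equal. -/
/-!
In a scalene triangle each of `d₁, d₂, d₃` is the length of exactly one side. The edge `AB` lies in
the triangles `ABC` and `ABD`, so its length differs from those of `AC`, `AD`, `BC`, `BD`; in the
triangle `ACD` it can therefore only be the length of `CD`. Hence opposite edges have equal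
lengths, the lengths `AB, AC, AD` are `d₁, d₂, d₃` in some order, and permuting `B, C, D`
(which permutes the three pairs of opposite edges) puts them in the required order.
-/

theorem multiset_nodup_of_ncard_eq_four {α : Type*} {a b c d : α}
    (h : ({a, b, c, d} : Set α).ncard = 4) : ({a, b, c, d} : Multiset α).Nodup := by
  classical
  rw [← Multiset.toFinset_card_eq_card_iff_nodup, ← Set.ncard_coe_finset]
  convert h using 2
  · ext; simp
  · rfl

theorem of_multiset_triple_eq {α : Type*} (P : α → α → α → Prop)
    (swap₁₂ : ∀ {a b c}, P a b c → P b a c) (swap₂₃ : ∀ {a b c}, P a b c → P a c b)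
    {a b c x y z : α} (h : ({a, b, c} : Multiset α) = {x, y, z}) (hP : P a b c) :
    P x y z := by
  have hperm : List.Perm [a, b, c] [x, y, z] := Multiset.coe_eq_coe.mp h
  rw [← List.mem_permutations] at hperm
  simp only [List.permutations, List.permutationsAux, List.foldr_cons, List.permutationsAux.rec,
    List.foldr_nil, List.permutationsAux2_snd_nil, List.permutationsAux2_snd_cons, List.append_nil,
    id_eq, List.cons_append, List.nil_append, List.mem_cons, List.cons.injEq, and_true,
    List.not_mem_nil, or_false] at hperm
  rcases hperm with ⟨rfl, rfl, rfl⟩ | ⟨rfl, rfl, rfl⟩ | ⟨rfl, rfl, rfl⟩ | ⟨rfl, rfl, rfl⟩ |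
    ⟨rfl, rfl, rfl⟩ | ⟨rfl, rfl, rfl⟩
  · exact hP
  · exact swap₁₂ hP
  · exact swap₁₂ (swap₂₃ (swap₁₂ hP))
  · exact swap₁₂ (swap₂₃ hP)
  · exact swap₂₃ (swap₁₂ hP)
  · exact swap₂₃ hP

theorem opposite_eq_of_nodup_triangles {α : Type*} {ab ac ad bc bd cd : α} {M : Multiset α}
    (hM : M.Nodup) (habc : {ab, ac, bc} = M) (habd : {ab, ad, bd} = M)
    (hacd : {ac, ad, cd} = M) : cd = ab := by
  have hab_ac : ab ≠ ac := fun h ↦ by simp [← habc, h] at hM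
  have hab_ad : ab ≠ ad := fun h ↦ by simp [← habd, h] at hM
  have hab : ab ∈ M := by simp [← habc]
  rw [← hacd] at hab
  simp only [Multiset.insert_eq_cons, Multiset.mem_cons, Multiset.mem_singleton] at hab
  exact (hab.resolve_left hab_ac |>.resolve_left hab_ad).symm

section Labeling

variable {P : Type*} [PseudoMetricSpace P]

def HasOppositeEdgeLabeling (S : Set P) (x y z : ℝ) : Prop :=
  ∃ A B C D : P, {A, B, C, D} = S ∧
    dist A B = x ∧ dist C D = x ∧ dist A C = y ∧ dist B D = y ∧ dist A D = z ∧ dist B C = z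

theorem HasOppositeEdgeLabeling.swap₁₂ {S : Set P} {x y z : ℝ}
    (h : HasOppositeEdgeLabeling S x y z) : HasOppositeEdgeLabeling S y x z := by
  obtain ⟨A, B, C, D, hS, hAB, hCD, hAC, hBD, hAD, hBC⟩ := h
  refine ⟨A, C, B, D, ?_, hAC, hBD, hAB, hCD, hAD, dist_comm C B ▸ hBC⟩
  rw [Set.insert_comm C, hS]

theorem HasOppositeEdgeLabeling.swap₂₃ {S : Set P} {x y z : ℝ}
    (h : HasOppositeEdgeLabeling S x y z) : HasOppositeEdgeLabeling S x z y := by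
  obtain ⟨A, B, C, D, hS, hAB, hCD, hAC, hBD, hAD, hBC⟩ := h
  refine ⟨A, B, D, C, ?_, hAB, dist_comm D C ▸ hCD, hAD, hBC, hAC, hBD⟩
  rw [Set.pair_comm D, hS]

theorem hasOppositeEdgeLabeling_of_multiset_eq {A B C D : P} {x y z : ℝ}
    (hCD : dist C D = dist A B) (hBD : dist B D = dist A C) (hBC : dist B C = dist A D)
    (h : ({dist A B, dist A C, dist A D} : Multiset ℝ) = {x, y, z}) :
    HasOppositeEdgeLabeling {A, B, C, D} x y z :=
  of_multiset_triple_eq (HasOppositeEdgeLabeling {A, B, C, D}) HasOppositeEdgeLabeling.swap₁₂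
    HasOppositeEdgeLabeling.swap₂₃ h
    ⟨A, B, C, D, rfl, rfl, hCD, rfl, hBD, rfl, hBC⟩

end Labeling

theorem four_points_scalene_opposite_edges_general
    (n : ℕ)
    (A B C D : EuclideanSpace ℝ (Fin n))
    (hdistinct : ({A, B, C, D} : Set (EuclideanSpace ℝ (Fin n))).ncard = 4)
    (d₁ d₂ d₃ : ℝ)
    (h12 : d₁ ≠ d₂) (h13 : d₁ ≠ d₃) (h23 : d₂ ≠ d₃)
    (hT : ∀ p ∈ ({A, B, C, D} : Set (EuclideanSpace ℝ (Fin n))),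
      ∀ q ∈ ({A, B, C, D} : Set (EuclideanSpace ℝ (Fin n))),
      ∀ r ∈ ({A, B, C, D} : Set (EuclideanSpace ℝ (Fin n))),
      p ≠ q → p ≠ r → q ≠ r →
      ¬ Collinear ℝ ({p, q, r} : Set (EuclideanSpace ℝ (Fin n))) ∧
      ({dist p q, dist p r, dist q r} : Multiset ℝ) = {d₁, d₂, d₃}) :
    ∃ A' B' C' D' : EuclideanSpace ℝ (Fin n),
      ({A', B', C', D'} : Set (EuclideanSpace ℝ (Fin n))) = {A, B, C, D} ∧
      dist A' B' = d₁ ∧ dist C' D' = d₁ ∧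
      dist A' C' = d₂ ∧ dist B' D' = d₂ ∧
      dist A' D' = d₃ ∧ dist B' C' = d₃ := by
  obtain ⟨⟨hAB, hAC, hAD⟩, ⟨hBC, hBD⟩, hCD⟩ := by
    simpa using multiset_nodup_of_ncard_eq_four hdistinct
  have hM : ({d₁, d₂, d₃} : Multiset ℝ).Nodup := by simp [h12, h13, h23]
  have mA : A ∈ ({A, B, C, D} : Set _) := by simp
  have mB : B ∈ ({A, B, C, D} : Set _) := by simp
  have mC : C ∈ ({A, B, C, D} : Set _) := by simp
  have mD : D ∈ ({A, B, C, D} : Set _) := by simp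
  have tri {p q r} (hp hq hr hpq hpr hqr) := (hT p hp q hq r hr hpq hpr hqr).2
  have eCD := opposite_eq_of_nodup_triangles hM (tri mA mB mC hAB hAC hBC)
    (tri mA mB mD hAB hAD hBD) (tri mA mC mD hAC hAD hCD)
  have eBD := opposite_eq_of_nodup_triangles hM (tri mA mC mB hAC hAB (Ne.symm hBC))
    (tri mA mC mD hAC hAD hCD) (tri mA mB mD hAB hAD hBD)
  have eBC := opposite_eq_of_nodup_triangles hM (tri mA mD mB hAD hAB (Ne.symm hBD))
    (tri mA mD mC hAD hAC (Ne.symm hCD)) (tri mA mB mC hAB hAC hBC)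
  exact hasOppositeEdgeLabeling_of_multiset_eq eCD eBD eBC (eBC ▸ tri mA mB mC hAB hAC hBC)

/-- A 4-point set determining exactly one distinct scalene triangle with sides
d₁, d₂, d₃ has, up to relabeling, opposite pairs of edges equal:
AB = CD = d₁, AC = BD = d₂, AD = BC = d₃. -/
theorem four_points_scalene_opposite_edges
    (n : ℕ)
    (A B C D : EuclideanSpace ℝ (Fin n))
    (hdistinct : ({A, B, C, D} : Set (EuclideanSpace ℝ (Fin n))).ncard = 4)
    (d₁ d₂ d₃ : ℝ) (h₁ : 0 < d₁) (h₂ : 0 < d₂) (h₃ : 0 < d₃)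
    (h12 : d₁ ≠ d₂) (h13 : d₁ ≠ d₃) (h23 : d₂ ≠ d₃)
    (hT : ∀ p ∈ ({A, B, C, D} : Set (EuclideanSpace ℝ (Fin n))),
      ∀ q ∈ ({A, B, C, D} : Set (EuclideanSpace ℝ (Fin n))),
      ∀ r ∈ ({A, B, C, D} : Set (EuclideanSpace ℝ (Fin n))),
      p ≠ q → p ≠ r → q ≠ r →
      ¬ Collinear ℝ ({p, q, r} : Set (EuclideanSpace ℝ (Fin n))) ∧
      ({dist p q, dist p r, dist q r} : Multiset ℝ) = {d₁, d₂, d₃}) :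
    ∃ A' B' C' D' : EuclideanSpace ℝ (Fin n),
      ({A', B', C', D'} : Set (EuclideanSpace ℝ (Fin n))) = {A, B, C, D} ∧
      dist A' B' = d₁ ∧ dist C' D' = d₁ ∧
      dist A' C' = d₂ ∧ dist B' D' = d₂ ∧
      dist A' D' = d₃ ∧ dist B' C' = d₃ :=
  four_points_scalene_opposite_edges_general n A B C D hdistinct d₁ d₂ d₃ h12 h13 h23 hT
end

section
/- Any 4-point configuration in ℝ³ satisfying the isosceles-triangle distance graph (edges AB = CD = d₂ and AC = AD = BC = BD = d₁) that is coplanar must be the vertex set of a square, and then necessarily d₁ = (√2/2)·d₂. -/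
/-!
C and D are equidistant from A and B, and A and B from C and D, so each segment lies on the
perpendicular bisector of the other. Hence the vector between the midpoints of AB and CD is
orthogonal to both B - A and D - C, which are themselves orthogonal; in a plane these two span
every direction, so the midpoints coincide. ACBD is then a parallelogram with equal sides d₁ and
equal diagonals d₂, and the parallelogram law gives 4 d₁² = 2 d₂².
-/

open AffineSubspace EuclideanGeometry RealInnerProductSpace Module

variable {V P : Type*} [NormedAddCommGroup V] [InnerProductSpace ℝ V] [MetricSpace P]
  [NormedAddTorsor V P]

theorem eq_zero_of_inner_eq_zero_of_finrank_le_two {K : Submodule ℝ V} [FiniteDimensional ℝ K]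
    (hK : finrank ℝ K ≤ 2) {u w x : V} (hu : u ∈ K) (hw : w ∈ K) (hx : x ∈ K)
    (hu₀ : u ≠ 0) (hw₀ : w ≠ 0) (huw : ⟪u, w⟫ = 0)
    (hxu : ⟪x, u⟫ = 0) (hxw : ⟪x, w⟫ = 0) : x = 0 := by
  by_contra hx₀
  have hli : LinearIndependent ℝ ![(⟨u, hu⟩ : K), ⟨w, hw⟩, ⟨x, hx⟩] := by
    refine linearIndependent_of_ne_zero_of_inner_eq_zero ?_ ?_
    · intro i; fin_cases i <;> simpa
    · intro i j hij; fin_cases i <;> fin_cases j <;> simp_all [real_inner_comm]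
  simpa using hli.fintype_card_le_finrank.trans hK

theorem inner_vsub_vsub_eq_zero_of_mem_perpBisector {A B p q : P} (hp : p ∈ perpBisector A B)
    (hq : q ∈ perpBisector A B) : ⟪p -ᵥ q, B -ᵥ A⟫ = 0 := by
  rw [← Submodule.mem_orthogonal_singleton_iff_inner_left, ← direction_perpBisector]
  exact vsub_mem_direction hp hq

theorem midpoint_eq_midpoint_of_mem_perpBisector {A B C D : P} (hAB : A ≠ B) (hCD : C ≠ D)
    (hC : C ∈ perpBisector A B) (hD : D ∈ perpBisector A B)
    (hA : A ∈ perpBisector C D) (hB : B ∈ perpBisector C D)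
    (hcop : Coplanar ℝ ({A, B, C, D} : Set P)) : midpoint ℝ A B = midpoint ℝ C D := by
  have := hcop.finiteDimensional_vectorSpan
  let S := affineSpan ℝ ({A, B, C, D} : Set P)
  have hS {p q : P} (hp : p ∈ S) (hq : q ∈ S) :
      p -ᵥ q ∈ vectorSpan ℝ ({A, B, C, D} : Set P) := by
    rw [← direction_affineSpan]
    exact vsub_mem_direction hp hq
  have hAS : A ∈ S := subset_affineSpan ℝ _ (by simp)
  have hBS : B ∈ S := subset_affineSpan ℝ _ (by simp)
  have hCS : C ∈ S := subset_affineSpan ℝ _ (by simp)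
  have hDS : D ∈ S := subset_affineSpan ℝ _ (by simp)
  rw [← vsub_eq_zero_iff_eq]
  exact eq_zero_of_inner_eq_zero_of_finrank_le_two hcop.finrank_le_two
    (hS hBS hAS) (hS hDS hCS)
    (hS (AffineMap.lineMap_mem _ hAS hBS) (AffineMap.lineMap_mem _ hCS hDS))
    (vsub_ne_zero.2 hAB.symm) (vsub_ne_zero.2 hCD.symm)
    (inner_vsub_vsub_eq_zero_of_mem_perpBisector hB hA)
    (inner_vsub_vsub_eq_zero_of_mem_perpBisector (midpoint_mem_perpBisector A B)
      (AffineMap.lineMap_mem _ hC hD))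
    (inner_vsub_vsub_eq_zero_of_mem_perpBisector (AffineMap.lineMap_mem _ hA hB)
      (midpoint_mem_perpBisector C D))

theorem dist_sq_add_dist_sq_of_midpoint_eq {A B C D : P} (h : midpoint ℝ A B = midpoint ℝ C D) :
    dist C A ^ 2 + dist C B ^ 2 = (dist A B ^ 2 + dist C D ^ 2) / 2 := by
  rw [dist_sq_add_dist_sq_eq_two_mul_dist_midpoint_sq_add_half_dist_sq, h, dist_left_midpoint]
  simp only [Real.norm_two]
  ring

theorem coplanar_isosceles_graph_is_square_general
    (A B C D : EuclideanSpace ℝ (Fin 3))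
    (d₁ d₂ : ℝ) (h₂ : 0 < d₂)
    (hAB : dist A B = d₂) (hCD : dist C D = d₂)
    (hAC : dist A C = d₁) (hAD : dist A D = d₁)
    (hBC : dist B C = d₁) (hBD : dist B D = d₁)
    (hcop : Coplanar ℝ ({A, B, C, D} : Set (EuclideanSpace ℝ (Fin 3)))) :
    midpoint ℝ A B = midpoint ℝ C D ∧ d₁ = Real.sqrt 2 / 2 * d₂ := by
  have hmid : midpoint ℝ A B = midpoint ℝ C D :=
    midpoint_eq_midpoint_of_mem_perpBisector (dist_pos.1 (hAB ▸ h₂)) (dist_pos.1 (hCD ▸ h₂))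
      (mem_perpBisector_iff_dist_eq'.2 (hAC.trans hBC.symm))
      (mem_perpBisector_iff_dist_eq'.2 (hAD.trans hBD.symm))
      (mem_perpBisector_iff_dist_eq.2 (hAC.trans hAD.symm))
      (mem_perpBisector_iff_dist_eq.2 (hBC.trans hBD.symm)) hcop
  refine ⟨hmid, (pow_left_inj₀ (hAC ▸ dist_nonneg) (by positivity) two_ne_zero).1 ?_⟩
  have hlaw := dist_sq_add_dist_sq_of_midpoint_eq hmid
  rw [dist_comm C A, dist_comm C B, hAB, hCD, hAC, hBC] at hlaw
  rw [mul_pow, div_pow, Real.sq_sqrt zero_le_two]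
  linarith

/-- A coplanar 4-point configuration in ℝ³ with AB = CD = d₂ and
AC = AD = BC = BD = d₁ is the vertex set of a square (in cyclic order A, C, B, D:
four equal sides d₁ and equal diagonals d₂ which bisect each other), and
necessarily d₁ = (√2/2)·d₂. -/
theorem coplanar_isosceles_graph_is_square
    (A B C D : EuclideanSpace ℝ (Fin 3))
    (hdistinct : ({A, B, C, D} : Set (EuclideanSpace ℝ (Fin 3))).ncard = 4)
    (d₁ d₂ : ℝ) (h₁ : 0 < d₁) (h₂ : 0 < d₂)
    (hAB : dist A B = d₂) (hCD : dist C D = d₂)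
    (hAC : dist A C = d₁) (hAD : dist A D = d₁)
    (hBC : dist B C = d₁) (hBD : dist B D = d₁)
    (hcop : Coplanar ℝ ({A, B, C, D} : Set (EuclideanSpace ℝ (Fin 3)))) :
    midpoint ℝ A B = midpoint ℝ C D ∧ d₁ = Real.sqrt 2 / 2 * d₂ :=
  coplanar_isosceles_graph_is_square_general A B C D d₁ d₂ h₂ hAB hCD hAC hAD hBC hBD hcop
end

section
/- Any coplanar 4-point configuration A, B, C, D in ℝᵈ satisfying AB = CD = d₁, AC = BD = d₂, AD = BC = d₃ with d₁, d₂, d₃ pairwise distinct is the vertex set of a rectangle; in particular the largest of d₁, d₂, d₃ satisfies dᵢ² = dⱼ² + dₖ². -/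
/-!
Equal opposite edges make the three vectors `A + B - (C + D)`, `A + C - (B + D)`,
`A + D - (B + C)` pairwise orthogonal: e.g. the inner product of `(A - B) + (C - D)` and
`(A - B) - (C - D)` is `‖A - B‖² - ‖C - D‖² = 0`. All three lie in the direction of the plane,
which has dimension at most `2`, so one of them vanishes. Thus the four points form a
parallelogram in some order, and its diagonals have equal length (they are opposite edges),
so by the parallelogram law it is a rectangle.
-/

open RealInnerProductSpace

variable {E : Type*} [NormedAddCommGroup E] [InnerProductSpace ℝ E]

lemma inner_add_sub_add_eq_zero_of_dist_eq {A B C D : E} (h : dist A B = dist C D) :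
    ⟪A + C - (B + D), A + D - (B + C)⟫ = 0 := by
  rw [dist_eq_norm, dist_eq_norm, ← real_inner_add_sub_eq_zero_iff] at h
  convert h using 2 <;> abel

lemma add_sub_add_mem_vectorSpan {s : Set E} {A B C D : E} (hA : A ∈ s) (hB : B ∈ s)
    (hC : C ∈ s) (hD : D ∈ s) : A + B - (C + D) ∈ vectorSpan ℝ s := by
  rw [add_sub_add_comm]
  exact add_mem (vsub_mem_vectorSpan ℝ hA hC) (vsub_mem_vectorSpan ℝ hB hD)

lemma eq_zero_or_eq_zero_or_eq_zero_of_inner_eq_zero {K : Submodule ℝ E}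
    (hK : Module.rank ℝ K ≤ 2) {u v w : E} (hu : u ∈ K) (hv : v ∈ K) (hw : w ∈ K)
    (huv : ⟪u, v⟫ = 0) (huw : ⟪u, w⟫ = 0) (hvw : ⟪v, w⟫ = 0) :
    u = 0 ∨ v = 0 ∨ w = 0 := by
  by_contra! hne
  obtain ⟨hu0, hv0, hw0⟩ := hne
  have hli : LinearIndependent ℝ ![(⟨u, hu⟩ : K), ⟨v, hv⟩, ⟨w, hw⟩] := by
    refine linearIndependent_of_ne_zero_of_inner_eq_zero (fun i ↦ ?_) fun i j hij ↦ ?_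
    · fin_cases i <;> simpa
    · fin_cases i <;> fin_cases j <;> simp_all [real_inner_comm]
  have := hli.cardinal_lift_le_rank.trans (Cardinal.lift_le.2 hK)
  norm_num at this

lemma sq_dist_eq_sq_dist_add_sq_dist_of_add_eq_add {P Q R S : E} (hpar : P + R = Q + S)
    (hdiag : dist P R = dist Q S) : dist P R ^ 2 = dist P Q ^ 2 + dist Q R ^ 2 := by
  have hS : Q - S = (Q - R) - (P - Q) := by
    rw [eq_sub_of_add_eq' hpar.symm]; abel
  have hPR : P - R = (P - Q) + (Q - R) := by abel
  have hlaw := parallelogram_law_with_norm ℝ (P - Q) (Q - R)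
  rw [dist_eq_norm, dist_eq_norm, hS, hPR, norm_sub_rev] at hdiag
  rw [dist_eq_norm, dist_eq_norm, dist_eq_norm, hPR]
  rw [← hdiag] at hlaw
  linarith

lemma add_eq_add_of_coplanar_of_dist_eq {A B C D : E} (hAB : dist A B = dist C D)
    (hAC : dist A C = dist B D) (hAD : dist A D = dist B C)
    (hcop : Coplanar ℝ ({A, B, C, D} : Set E)) :
    A + B = C + D ∨ A + C = B + D ∨ A + D = B + C := by
  have huv := inner_add_sub_add_eq_zero_of_dist_eq hAD
  have huw := inner_add_sub_add_eq_zero_of_dist_eq hAC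
  have hvw := inner_add_sub_add_eq_zero_of_dist_eq hAB
  rw [add_comm D C, add_comm D B] at huv
  rw [add_comm C B] at huw
  simp only [← sub_eq_zero (a := A + _)]
  exact eq_zero_or_eq_zero_or_eq_zero_of_inner_eq_zero hcop
    (add_sub_add_mem_vectorSpan (by simp) (by simp) (by simp) (by simp))
    (add_sub_add_mem_vectorSpan (by simp) (by simp) (by simp) (by simp))
    (add_sub_add_mem_vectorSpan (by simp) (by simp) (by simp) (by simp)) huv huw hvw

lemma midpoint_eq_midpoint_of_add_eq_add {P Q R S : E} (h : P + R = Q + S) :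
    midpoint ℝ P R = midpoint ℝ Q S := by
  rw [midpoint_eq_smul_add, midpoint_eq_smul_add, h]

theorem coplanar_scalene_graph_is_rectangle_general
    (n : ℕ)
    (A B C D : EuclideanSpace ℝ (Fin n))
    (d₁ d₂ d₃ : ℝ)
    (hAB : dist A B = d₁) (hCD : dist C D = d₁)
    (hAC : dist A C = d₂) (hBD : dist B D = d₂)
    (hAD : dist A D = d₃) (hBC : dist B C = d₃)
    (hcop : Coplanar ℝ ({A, B, C, D} : Set (EuclideanSpace ℝ (Fin n)))) :
    (∃ P Q R S : EuclideanSpace ℝ (Fin n),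
      ({P, Q, R, S} : Set (EuclideanSpace ℝ (Fin n))) = {A, B, C, D} ∧
      midpoint ℝ P R = midpoint ℝ Q S ∧
      dist P R = dist Q S ∧
      dist P R ^ 2 = dist P Q ^ 2 + dist Q R ^ 2) ∧
    (d₁ ^ 2 = d₂ ^ 2 + d₃ ^ 2 ∨ d₂ ^ 2 = d₁ ^ 2 + d₃ ^ 2 ∨ d₃ ^ 2 = d₁ ^ 2 + d₂ ^ 2) := by
  obtain h | h | h := add_eq_add_of_coplanar_of_dist_eq (hAB.trans hCD.symm)
    (hAC.trans hBD.symm) (hAD.trans hBC.symm) hcop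
  · have hdiag : dist A B = dist C D := hAB.trans hCD.symm
    have hpyth := sq_dist_eq_sq_dist_add_sq_dist_of_add_eq_add h hdiag
    refine ⟨⟨A, C, B, D, by rw [Set.insert_comm C B], midpoint_eq_midpoint_of_add_eq_add h, hdiag,
      hpyth⟩, Or.inl ?_⟩
    rwa [hAB, hAC, dist_comm, hBC] at hpyth
  · have hdiag : dist A C = dist B D := hAC.trans hBD.symm
    have hpyth := sq_dist_eq_sq_dist_add_sq_dist_of_add_eq_add h hdiag
    refine ⟨⟨A, B, C, D, rfl, midpoint_eq_midpoint_of_add_eq_add h, hdiag, hpyth⟩,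
      Or.inr (Or.inl ?_)⟩
    rwa [hAC, hAB, hBC] at hpyth
  · have hdiag : dist A D = dist B C := hAD.trans hBC.symm
    have hpyth := sq_dist_eq_sq_dist_add_sq_dist_of_add_eq_add h hdiag
    refine ⟨⟨A, B, D, C, by rw [Set.pair_comm], midpoint_eq_midpoint_of_add_eq_add h, hdiag,
      hpyth⟩, Or.inr (Or.inr ?_)⟩
    rwa [hAD, hAB, hBD] at hpyth

/-- A coplanar 4-point configuration in ℝᵈ with opposite edges pairwise equal to
pairwise distinct d₁, d₂, d₃ is the vertex set of a rectangle; in particular the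
largest distance satisfies the Pythagorean relation with the other two. -/
theorem coplanar_scalene_graph_is_rectangle
    (n : ℕ)
    (A B C D : EuclideanSpace ℝ (Fin n))
    (hdistinct : ({A, B, C, D} : Set (EuclideanSpace ℝ (Fin n))).ncard = 4)
    (d₁ d₂ d₃ : ℝ) (h₁ : 0 < d₁) (h₂ : 0 < d₂) (h₃ : 0 < d₃)
    (h12 : d₁ ≠ d₂) (h13 : d₁ ≠ d₃) (h23 : d₂ ≠ d₃)
    (hAB : dist A B = d₁) (hCD : dist C D = d₁)
    (hAC : dist A C = d₂) (hBD : dist B D = d₂)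
    (hAD : dist A D = d₃) (hBC : dist B C = d₃)
    (hcop : Coplanar ℝ ({A, B, C, D} : Set (EuclideanSpace ℝ (Fin n)))) :
    (∃ P Q R S : EuclideanSpace ℝ (Fin n),
      ({P, Q, R, S} : Set (EuclideanSpace ℝ (Fin n))) = {A, B, C, D} ∧
      midpoint ℝ P R = midpoint ℝ Q S ∧
      dist P R = dist Q S ∧
      dist P R ^ 2 = dist P Q ^ 2 + dist Q R ^ 2) ∧
    (d₁ ^ 2 = d₂ ^ 2 + d₃ ^ 2 ∨ d₂ ^ 2 = d₁ ^ 2 + d₃ ^ 2 ∨ d₃ ^ 2 = d₁ ^ 2 + d₂ ^ 2) :=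
  coplanar_scalene_graph_is_rectangle_general n A B C D d₁ d₂ d₃ hAB hCD hAC hBD hAD hBC hcop
end

section
/- Suppose five points A₁,…,A₅ in ℝ³ are such that every triple forms an equilateral triangle of side e. Then A₁, A₂, A₃ span a plane P, and A₄, A₅ both lie on the line through the circumcenter p of triangle A₁A₂A₃ perpendicular to P; moreover d(A₄, A₅) = e forces d(A₄, p) = e/2, and the Pythagorean identity (e/2)² + (√3 e/3)² = e² fails, a contradiction. -/
/-!
Points at pairwise distance `e` are affinely independent: if the weights `wᵢ` sum to zero, writing
inner products through distances gives `‖∑ wᵢ • pᵢ‖² = (e² / 2) ∑ wᵢ²`. So at most four such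
points fit in `ℝ³`, whereas any two of the five given points, together with a third one, form an
equilateral triangle of side `e`.
-/

open RealInnerProductSpace Module

namespace EuclideanGeometry

variable {V P : Type*} [NormedAddCommGroup V] [InnerProductSpace ℝ V] [MetricSpace P]
  [NormedAddTorsor V P]

theorem inner_weightedVSub_self_of_pairwise_dist_eq {ι : Type*} {s : Finset ι} {w : ι → ℝ}
    {p : ι → P} {e : ℝ} (hw : ∑ i ∈ s, w i = 0) (hp : Pairwise fun i j ↦ dist (p i) (p j) = e) :
    ⟪s.weightedVSub p w, s.weightedVSub p w⟫ = e ^ 2 / 2 * ∑ i ∈ s, w i ^ 2 := by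
  classical
  have hdist : ∀ i j,
      dist (p i) (p j) * dist (p i) (p j) = e ^ 2 - if i = j then e ^ 2 else 0 := by
    intro i j
    by_cases hij : i = j
    · simp [hij]
    · simp [hij, hp hij, sq]
  rw [inner_weightedVSub p hw p hw]
  simp_rw [hdist, mul_sub, Finset.sum_sub_distrib, mul_ite, mul_zero, Finset.sum_ite_eq]
  have hcross : ∑ i ∈ s, ∑ j ∈ s, w i * w j * e ^ 2 = 0 := by
    simp [← Finset.sum_mul, ← Finset.mul_sum, hw]
  rw [hcross, Finset.sum_ite_mem, Finset.inter_self, zero_sub, neg_neg, Finset.sum_div,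
    Finset.mul_sum]
  exact Finset.sum_congr rfl fun i _ ↦ by ring

theorem affineIndependent_of_pairwise_dist_eq {ι : Type*} {p : ι → P} {e : ℝ} (he : e ≠ 0)
    (hp : Pairwise fun i j ↦ dist (p i) (p j) = e) : AffineIndependent ℝ p := by
  intro s w hw hzero
  have hsq : ∑ i ∈ s, w i ^ 2 = 0 := by
    have h := inner_weightedVSub_self_of_pairwise_dist_eq hw hp
    rw [hzero, inner_zero_left] at h
    exact (mul_eq_zero.1 h.symm).resolve_left (by positivity)
  exact fun i hi ↦ pow_eq_zero_iff two_ne_zero |>.1 <|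
    (Finset.sum_eq_zero_iff_of_nonneg fun j _ ↦ sq_nonneg (w j)).1 hsq i hi

theorem ncard_le_finrank_add_one_of_pairwise_dist_eq [FiniteDimensional ℝ V] {s : Set P} {e : ℝ}
    (hs : s.Pairwise fun x y ↦ dist x y = e) : s.ncard ≤ finrank ℝ V + 1 := by
  have hind : AffineIndependent ℝ ((↑) : s → P) := by
    rcases eq_or_ne e 0 with rfl | he
    · have : Subsingleton s :=
        ⟨fun x y ↦ Subtype.ext <| by_contra fun hxy ↦ hxy (dist_eq_zero.1 (hs x.2 y.2 hxy))⟩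
      exact affineIndependent_of_subsingleton ℝ _
    · exact affineIndependent_of_pairwise_dist_eq he fun x y hxy ↦
        hs x.2 y.2 (Subtype.coe_ne_coe.2 hxy)
  have : Fintype s := (finite_set_of_fin_dim_affineIndependent ℝ hind).fintype
  calc s.ncard = Fintype.card s := by rw [← Nat.card_coe_set_eq, Nat.card_eq_fintype_card]
    _ ≤ finrank ℝ (vectorSpan ℝ (Set.range ((↑) : s → P))) + 1 := hind.card_le_finrank_succ
    _ ≤ finrank ℝ V + 1 := by grw [Submodule.finrank_le]

end EuclideanGeometry

theorem no_five_equilateral_R3_general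
    (A₁ A₂ A₃ A₄ A₅ : EuclideanSpace ℝ (Fin 3))
    (e : ℝ)
    (hT : ∀ p ∈ ({A₁, A₂, A₃, A₄, A₅} : Set (EuclideanSpace ℝ (Fin 3))),
      ∀ q ∈ ({A₁, A₂, A₃, A₄, A₅} : Set (EuclideanSpace ℝ (Fin 3))),
      ∀ r ∈ ({A₁, A₂, A₃, A₄, A₅} : Set (EuclideanSpace ℝ (Fin 3))),
      p ≠ q → p ≠ r → q ≠ r →
      dist p q = e ∧ dist p r = e ∧ dist q r = e)
    (hdistinct : ({A₁, A₂, A₃, A₄, A₅} : Set (EuclideanSpace ℝ (Fin 3))).ncard = 5) :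
    False := by
  set S : Set (EuclideanSpace ℝ (Fin 3)) := {A₁, A₂, A₃, A₄, A₅}
  have hS : S.Pairwise fun x y ↦ dist x y = e := by
    intro x hx y hy hxy
    obtain ⟨r, hr, hrxy⟩ := Set.exists_mem_notMem_of_ncard_lt_ncard (s := {x, y}) (t := S)
      (by rw [Set.ncard_pair hxy, hdistinct]; norm_num)
    simp only [Set.mem_insert_iff, Set.mem_singleton_iff, not_or] at hrxy
    exact (hT x hx y hy r hr hxy (Ne.symm hrxy.1) (Ne.symm hrxy.2)).1
  have hcard := EuclideanGeometry.ncard_le_finrank_add_one_of_pairwise_dist_eq hS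
  rw [hdistinct, finrank_euclideanSpace_fin] at hcard
  omega

/-- Five points in ℝ³, every triple of which forms an equilateral triangle of side e,
yield a contradiction (via the circumcenter/Pythagoras argument). -/
theorem no_five_equilateral_R3
    (A₁ A₂ A₃ A₄ A₅ : EuclideanSpace ℝ (Fin 3))
    (e : ℝ) (he : 0 < e)
    (hT : ∀ p ∈ ({A₁, A₂, A₃, A₄, A₅} : Set (EuclideanSpace ℝ (Fin 3))),
      ∀ q ∈ ({A₁, A₂, A₃, A₄, A₅} : Set (EuclideanSpace ℝ (Fin 3))),
      ∀ r ∈ ({A₁, A₂, A₃, A₄, A₅} : Set (EuclideanSpace ℝ (Fin 3))),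
      p ≠ q → p ≠ r → q ≠ r →
      dist p q = e ∧ dist p r = e ∧ dist q r = e)
    (hdistinct : ({A₁, A₂, A₃, A₄, A₅} : Set (EuclideanSpace ℝ (Fin 3))).ncard = 5) :
    False :=
  no_five_equilateral_R3_general A₁ A₂ A₃ A₄ A₅ e hT hdistinct
end

section
/- For d ≥ 4, any set S ⊂ ℝᵈ determining exactly one distinct triangle satisfies |S| ≤ d + 1, with equality only if S is the vertex set of a regular d-simplex. -/
/-!
All non-degenerate triangles of `S` have the same perimeter. If `y` lay strictly between
`x` and `z` in `S`, a point `w ∈ S` off that line would make the triangles `wxy` and `wxz`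
non-degenerate, yet the strict triangle inequality `|yw| < |yz| + |zw|` makes `wxy` the shorter
one; hence no three points of `S` are collinear and every triple of `S` realises the triangle.
If the triangle is equilateral, `S` is equidistant, hence affinely independent, so
`|S| ≤ d + 1`. Otherwise some side length `u` occurs exactly once in the triangle: the
`u`-edges form a matching meeting every triple, which forces `|S| ≤ 4 ≤ d`.
-/

open scoped RealInnerProductSpace

section Collinear

variable {k V P : Type*} [DivisionRing k] [AddCommGroup V] [Module k V] [AddTorsor V P]

theorem exists_mem_not_collinear_of_ne {s : Set P} (hs : ¬Collinear k s) {p q : P}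
    (hpq : p ≠ q) : ∃ w ∈ s, ¬Collinear k ({w, p, q} : Set P) := by
  by_contra! h
  have hline : Collinear k (line[k, p, q] : Set P) := by
    change Module.rank k (line[k, p, q]).direction ≤ 1
    rw [direction_affineSpan]
    exact collinear_pair k p q
  exact hs <| hline.subset fun w hw =>
    (h w hw).mem_affineSpan_of_mem_of_ne (by simp) (by simp) (by simp) hpq

end Collinear

section StrictConvex

variable {V P : Type*} [NormedAddCommGroup V] [NormedSpace ℝ V] [StrictConvexSpace ℝ V]
  [MetricSpace P] [NormedAddTorsor V P]

theorem Sbtw.dist_add_dist_lt {x y z w : P} (h : Sbtw ℝ x y z)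
    (hw : ¬Collinear ℝ ({w, x, z} : Set P)) :
    dist w y + dist x y < dist w z + dist x z := by
  have hyzw : ¬Wbtw ℝ y z w := fun hb => hw <| by
    have hcol : Collinear ℝ ({w, x, y, z} : Set P) :=
      collinear_insert_insert_of_mem_affineSpan_pair
        (hb.collinear.mem_affineSpan_of_mem_of_ne (by simp) (by simp) (by simp) h.ne_right)
        (h.wbtw.collinear.mem_affineSpan_of_mem_of_ne (by simp) (by simp) (by simp) h.ne_right)
    exact hcol.subset (by intro t; simp; tauto)
  have hlt := dist_lt_dist_add_dist_iff.2 hyzw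
  have hxz := h.wbtw.dist_add_dist
  rw [dist_comm w y, dist_comm w z]
  linarith

theorem not_collinear_of_forall_perimeter_eq {S : Set P} {ℓ : ℝ} (hS : ¬Collinear ℝ S)
    (hper : ∀ a ∈ S, ∀ b ∈ S, ∀ c ∈ S, ¬Collinear ℝ ({a, b, c} : Set P) →
      dist a b + dist a c + dist b c = ℓ)
    {x y z : P} (hx : x ∈ S) (hy : y ∈ S) (hz : z ∈ S) (hxy : x ≠ y) (hxz : x ≠ z)
    (hyz : y ≠ z) : ¬Collinear ℝ ({x, y, z} : Set P) := by
  have not_sbtw : ∀ {x y z : P}, x ∈ S → y ∈ S → z ∈ S → ¬Sbtw ℝ x y z := by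
    intro x y z hx hy hz h
    obtain ⟨w, hw, hwxz⟩ := exists_mem_not_collinear_of_ne hS h.left_ne_right
    have hwxy : ¬Collinear ℝ ({w, x, y} : Set P) := by
      rw [← affineIndependent_iff_not_collinear_set] at hwxz ⊢
      refine affineIndependent_of_affineIndependent_collinear_ne hwxz ?_ h.ne_left.symm
      rw [Set.pair_comm]
      exact h.wbtw.collinear
    have := hper w hw x hx y hy hwxy
    have := hper w hw x hx z hz hwxz
    linarith [h.dist_add_dist_lt hwxz]
  intro hcol
  rcases hcol.wbtw_or_wbtw_or_wbtw with h | h | h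
  · exact not_sbtw hx hy hz ⟨h, hxy.symm, hyz⟩
  · exact not_sbtw hy hz hx ⟨h, hyz.symm, hxz.symm⟩
  · exact not_sbtw hz hx hy ⟨h, hxz, hxy⟩

end StrictConvex

section Equidistant

variable {V : Type*} [NormedAddCommGroup V] [InnerProductSpace ℝ V] {e : ℝ}

/-- For weights `w` summing to zero, `‖∑ wᵢ pᵢ‖² = -½ ∑ᵢⱼ wᵢ wⱼ ‖pᵢ - pⱼ‖² = ½ e² ∑ wᵢ²`. -/
theorem affineIndependent_of_pairwise_dist_eq {ι : Type*} {p : ι → V} (he : 0 < e)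
    (h : Pairwise fun i j => dist (p i) (p j) = e) : AffineIndependent ℝ p := by
  classical
  rw [affineIndependent_iff]
  intro s w hw hsum i hi
  have hterm : ∀ a b, w a * w b * (‖p a - p b‖ * ‖p a - p b‖) =
      e ^ 2 * w a * w b - (if a = b then e ^ 2 * w a ^ 2 else 0) := by
    intro a b
    by_cases hab : a = b
    · simp only [hab, sub_self, norm_zero, mul_zero, if_true]
      ring
    · rw [← dist_eq_norm, h hab, if_neg hab]
      ring
  have hsq : e ^ 2 * ∑ a ∈ s, w a ^ 2 = 0 := by
    have := inner_sum_smul_sum_smul_of_sum_eq_zero p hw p hw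
    simp only [hsum, inner_zero_left, hterm, Finset.sum_sub_distrib, ← Finset.mul_sum, hw,
      mul_zero, Finset.sum_ite_eq, zero_sub, Finset.sum_neg_distrib, Finset.sum_ite_mem,
      Finset.inter_self, neg_neg] at this
    linarith
  have hsq' := (mul_eq_zero.1 hsq).resolve_left (by positivity)
  exact pow_eq_zero_iff two_ne_zero |>.1 <|
    (Finset.sum_eq_zero_iff_of_nonneg fun a _ => sq_nonneg (w a)).1 hsq' i hi

theorem Finset.card_le_finrank_succ_of_pairwise_dist_eq [FiniteDimensional ℝ V] (S : Finset V)
    (he : 0 < e) (h : ∀ p ∈ S, ∀ q ∈ S, p ≠ q → dist p q = e) :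
    S.card ≤ Module.finrank ℝ V + 1 := by
  have hind : AffineIndependent ℝ ((↑) : S → V) :=
    affineIndependent_of_pairwise_dist_eq he fun i j hij =>
      h _ i.2 _ j.2 (Subtype.coe_injective.ne hij)
  have := hind.card_le_finrank_succ
  rw [Fintype.card_coe] at this
  exact this.trans (by gcongr; exact Submodule.finrank_le _)

end Equidistant

section Combinatorics

variable {α β : Type*} [DecidableEq β]

theorem Multiset.exists_count_eq_one_of_not_all_eq {t₁ t₂ t₃ : β}
    (h : ¬(t₁ = t₂ ∧ t₁ = t₃)) : ∃ u, Multiset.count u {t₁, t₂, t₃} = 1 := by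
  by_cases h₂₃ : t₂ = t₃
  · subst h₂₃
    exact ⟨t₁, by simp [show t₁ ≠ t₂ by tauto]⟩
  by_cases h₁₂ : t₁ = t₂
  · subst h₁₂
    exact ⟨t₃, by simp [Ne.symm h₂₃]⟩
  · exact ⟨t₂, by simp [Ne.symm h₁₂, h₂₃]⟩

theorem Finset.card_le_four_of_count_eq_one (S : Finset α) (f : α → α → β) (u : β)
    (h : ∀ p ∈ S, ∀ q ∈ S, ∀ r ∈ S, p ≠ q → p ≠ r → q ≠ r →
      Multiset.count u {f p q, f p r, f q r} = 1) :
    S.card ≤ 4 := by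
  classical
  have cover : ∀ p ∈ S, ∀ q ∈ S, ∀ r ∈ S, p ≠ q → p ≠ r → q ≠ r →
      f p q ≠ u → f p r ≠ u → f q r = u := by
    intro p hp q hq r hr hpq hpr hqr hfpq hfpr
    have := h p hp q hq r hr hpq hpr hqr
    simp only [Multiset.insert_eq_cons, Multiset.count_cons, Multiset.count_singleton,
      if_neg hfpq.symm, if_neg hfpr.symm] at this
    by_contra hfqr
    simp [Ne.symm hfqr] at this
  have matching : ∀ p ∈ S, ∀ q ∈ S, ∀ r ∈ S, p ≠ q → p ≠ r → q ≠ r →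
      f p q = u → f p r ≠ u := by
    intro p hp q hq r hr hpq hpr hqr hfpq hfpr
    have := h p hp q hq r hr hpq hpr hqr
    simp [hfpq, hfpr] at this
  by_contra! hS
  obtain ⟨a, ha⟩ : S.Nonempty := Finset.card_pos.1 (by omega)
  have hnbr : ((S.erase a).filter (f a · = u)).card ≤ 1 := by
    refine Finset.card_le_one.2 fun q hq r hr => by_contra fun hqr => ?_
    simp only [Finset.mem_filter, Finset.mem_erase] at hq hr
    exact matching a ha q hq.1.2 r hr.1.2 hq.1.1.symm hr.1.1.symm hqr hq.2 hr.2
  have hfar : 2 < ((S.erase a).filter (¬f a · = u)).card := by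
    have := Finset.card_filter_add_card_filter_not (s := S.erase a) (f a · = u)
    have := Finset.card_erase_of_mem ha
    omega
  obtain ⟨x, hx, y, hy, z, hz, hxy, hxz, hyz⟩ := Finset.two_lt_card.1 hfar
  simp only [Finset.mem_filter, Finset.mem_erase] at hx hy hz
  exact matching x hx.1.2 y hy.1.2 z hz.1.2 hxy hxz hyz
    (cover a ha x hx.1.2 y hy.1.2 hx.1.1.symm hy.1.1.symm hxy hx.2 hy.2)
    (cover a ha x hx.1.2 z hz.1.2 hx.1.1.symm hz.1.1.symm hxz hx.2 hz.2)

end Combinatorics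

/-- For d ≥ 4, any set S ⊂ ℝᵈ determining exactly one distinct triangle has
|S| ≤ d + 1, with equality only if S is the vertex set of a regular d-simplex. -/
theorem one_triangle_card_le_high_dim
    (d : ℕ) (hd : 4 ≤ d)
    (S : Finset (EuclideanSpace ℝ (Fin d)))
    (t₁ t₂ t₃ : ℝ)
    (hT : ∀ a ∈ S, ∀ b ∈ S, ∀ c ∈ S, a ≠ b → a ≠ c → b ≠ c →
      ¬ Collinear ℝ ({a, b, c} : Set (EuclideanSpace ℝ (Fin d))) →
      ({dist a b, dist a c, dist b c} : Multiset ℝ) = {t₁, t₂, t₃})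
    (hnonempty : ∃ a ∈ S, ∃ b ∈ S, ∃ c ∈ S, a ≠ b ∧ a ≠ c ∧ b ≠ c ∧
      ¬ Collinear ℝ ({a, b, c} : Set (EuclideanSpace ℝ (Fin d)))) :
    S.card ≤ d + 1 ∧
    (S.card = d + 1 → ∃ e : ℝ, 0 < e ∧ ∀ p ∈ S, ∀ q ∈ S, p ≠ q → dist p q = e) := by
  obtain ⟨a, ha, b, hb, c, hc, hab, -, -, habc⟩ := hnonempty
  have hS : ¬Collinear ℝ (S : Set (EuclideanSpace ℝ (Fin d))) := fun h =>
    habc (h.subset (by simp [Set.insert_subset_iff, ha, hb, hc]))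
  by_cases hequi : t₁ = t₂ ∧ t₁ = t₃
  · obtain ⟨rfl, rfl⟩ := hequi
    have hdist : ∀ p ∈ S, ∀ q ∈ S, p ≠ q → dist p q = t₁ := by
      intro p hp q hq hpq
      obtain ⟨r, hr, hrpq⟩ := exists_mem_not_collinear_of_ne hS hpq
      have := hT r hr p hp q hq (ne₁₂_of_not_collinear hrpq) (ne₁₃_of_not_collinear hrpq) hpq hrpq
      have hmem : dist p q ∈ ({t₁, t₁, t₁} : Multiset ℝ) := this ▸ by simp
      simpa using hmem
    have he : 0 < t₁ := hdist a ha b hb hab ▸ dist_pos.2 hab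
    have hcard := S.card_le_finrank_succ_of_pairwise_dist_eq he hdist
    rw [finrank_euclideanSpace_fin] at hcard
    exact ⟨hcard, fun _ => ⟨t₁, he, hdist⟩⟩
  · have hper : ∀ x ∈ S, ∀ y ∈ S, ∀ z ∈ S,
        ¬Collinear ℝ ({x, y, z} : Set (EuclideanSpace ℝ (Fin d))) →
        dist x y + dist x z + dist y z = t₁ + t₂ + t₃ := fun x hx y hy z hz h => by
      simpa [add_assoc] using congrArg Multiset.sum <| hT x hx y hy z hz
        (ne₁₂_of_not_collinear h) (ne₁₃_of_not_collinear h) (ne₂₃_of_not_collinear h) h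
    obtain ⟨u, hu⟩ := Multiset.exists_count_eq_one_of_not_all_eq hequi
    have hcard : S.card ≤ 4 := S.card_le_four_of_count_eq_one dist u
      fun p hp q hq r hr hpq hpr hqr => by
        rw [hT p hp q hq r hr hpq hpr hqr
          (not_collinear_of_forall_perimeter_eq hS hper hp hq hr hpq hpr hqr)]
        exact hu
    exact ⟨by omega, fun h => absurd h (by omega)⟩
end
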